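/- arXiv:2312.16665 — 2 statements merged into one kernel-verified Lean document; each statement's English description precedes it below -/
import Mathlib

section
/- With the setup of the parsing lemma, if for some letter k we have |x₁|_k ≥ |x₂|_k + 2, then a₁x₁b₁ ∼ a₂x₂b₂; moreover in this case |x₁| = |x₂|, a₂ = b₂ = k, and |p₂|, |s₂| ≥ 10. -/
/-- The image of 0 under the morphism: 0740103050260. -/
def f0 : List (Fin 8) := [0,7,4,0,1,0,3,0,5,0,2,6,0]

/-- The cyclic shift morphism σ, sending each letter a to a+1 (mod 8). -/
def sigmaW (w : List (Fin 8)) : List (Fin 8) := w.map (· + 1)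

/-- The image of a letter under the cyclic morphism f: f(a) = σ^a(f(0)). -/
def fL (a : Fin 8) : List (Fin 8) := f0.map (· + a)

/-- The morphism f extended to words. -/
def fW (w : List (Fin 8)) : List (Fin 8) := w.flatMap fL

/-- f^n(0). -/
def fIter (n : ℕ) : List (Fin 8) := fW^[n] [0]

/-- u is a factor of the fixed point f^ω(0): since f^n(0) is a prefix of
f^{n+1}(0), this holds iff u is a factor of some f^n(0). -/
def FactorFP (u : List (Fin 8)) : Prop := ∃ n, u <:+: fIter n

/-- A letter of Σ ∪ {ε} viewed as a word. -/
def optL (a : Option (Fin 8)) : List (Fin 8) := a.elim [] (fun x => [x])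

/-- The image under f of an element of Σ ∪ {ε}. -/
def imgF (a : Option (Fin 8)) : List (Fin 8) := a.elim [] fL

/- ----- auxiliary lemmas ----- -/

lemma count_fL' (a c : Fin 8) : (fL a).count c = if c = a then 6 else 1 := by
  revert a c; decide

lemma count_fW' (w : List (Fin 8)) (c : Fin 8) :
    (fW w).count c = w.length + 5 * w.count c := by
  induction w with
  | nil => simp [fW]
  | cons a w ih =>
    rw [show fW (a::w) = fL a ++ fW w from rfl, List.count_append, ih, count_fL',
      List.count_cons, List.length_cons]
    by_cases h : c = a
    · simp [h]; ring
    · have h' : ¬ a = c := fun e => h e.symm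
      simp [h, h']; ring

lemma length_fW' (w : List (Fin 8)) : (fW w).length = 13 * w.length := by
  induction w with
  | nil => simp [fW]
  | cons a w ih =>
    rw [show fW (a::w) = fL a ++ fW w from rfl, List.length_append, ih]
    simp [fL, f0, List.length_cons]; ring

lemma take_facts' : ∀ n : Fin 13, ∀ a k : Fin 8,
    (((fL a).take n.val).count k ≤ 5) ∧
    (((fL a).take n.val).count k = 5 → k = a ∧ 10 ≤ n.val) ∧
    (4 ≤ ((fL a).take n.val).count k → 8 ≤ n.val) ∧
    (k = a → 8 ≤ n.val → 4 ≤ ((fL a).take n.val).count k) ∧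
    (k = a → 1 ≤ n.val → 1 ≤ ((fL a).take n.val).count k) ∧
    (k ≠ a → ((fL a).take n.val).count k ≤ 1) := by decide

lemma drop_facts' : ∀ n : Fin 13, ∀ b k : Fin 8,
    (((fL b).drop (13 - n.val)).count k ≤ 5) ∧
    (((fL b).drop (13 - n.val)).count k = 5 → k = b ∧ 10 ≤ n.val) ∧
    (4 ≤ ((fL b).drop (13 - n.val)).count k → 8 ≤ n.val) ∧
    (k = b → 8 ≤ n.val → 4 ≤ ((fL b).drop (13 - n.val)).count k) ∧
    (k = b → 1 ≤ n.val → 1 ≤ ((fL b).drop (13 - n.val)).count k) ∧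
    (k ≠ b → ((fL b).drop (13 - n.val)).count k ≤ 1) := by decide

lemma pref_facts' (a k : Fin 8) {p : List (Fin 8)} (hp : p <+: fL a)
    (hl : p.length ≤ 12) :
    p.count k ≤ 5 ∧ (p.count k = 5 → k = a ∧ 10 ≤ p.length) ∧
    (4 ≤ p.count k → 8 ≤ p.length) ∧ (k = a → 8 ≤ p.length → 4 ≤ p.count k) ∧
    (k = a → p ≠ [] → 1 ≤ p.count k) ∧ (k ≠ a → p.count k ≤ 1) := by
  have hpe := List.prefix_iff_eq_take.mp hp
  have h := take_facts' ⟨p.length, by omega⟩ a k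
  simp only [← hpe] at h
  obtain ⟨h1, h2, h3, h4, h5, h6⟩ := h
  refine ⟨h1, h2, h3, h4, fun e hne => h5 e ?_, h6⟩
  have := List.length_pos_iff.mpr hne
  omega

lemma suf_facts' (b k : Fin 8) {s : List (Fin 8)} (hs : s <:+ fL b)
    (hl : s.length ≤ 12) :
    s.count k ≤ 5 ∧ (s.count k = 5 → k = b ∧ 10 ≤ s.length) ∧
    (4 ≤ s.count k → 8 ≤ s.length) ∧ (k = b → 8 ≤ s.length → 4 ≤ s.count k) ∧
    (k = b → s ≠ [] → 1 ≤ s.count k) ∧ (k ≠ b → s.count k ≤ 1) := by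
  have hlen : (fL b).length = 13 := by simp [fL, f0]
  have hse := List.suffix_iff_eq_drop.mp hs
  rw [hlen] at hse
  have h := drop_facts' ⟨s.length, by omega⟩ b k
  simp only [← hse] at h
  obtain ⟨h1, h2, h3, h4, h5, h6⟩ := h
  refine ⟨h1, h2, h3, h4, fun e hne => h5 e ?_, h6⟩
  have := List.length_pos_iff.mpr hne
  omega

lemma optL_some' (a : Fin 8) : optL (some a) = [a] := rfl

theorem stmt6
(X₁ X₂ x₁ x₂ p₁ p₂ s₁ s₂ : List (Fin 8))
    (a₁ a₂ b₁ b₂ : Option (Fin 8))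
    (hperm : X₁.Perm X₂)
    (hX1 : X₁ = s₁ ++ fW x₁ ++ p₁) (hX2 : X₂ = s₂ ++ fW x₂ ++ p₂)
    (hp1 : p₁ <+: imgF a₁) (hp1len : p₁.length ≤ 12)
    (hp2 : p₂ <+: imgF a₂) (hp2len : p₂.length ≤ 12)
    (hs1 : s₁ <:+ imgF b₁) (hs1len : s₁.length ≤ 12)
    (hs2 : s₂ <:+ imgF b₂) (hs2len : s₂.length ≤ 12)
    (k : Fin 8) (hk : x₁.count k ≥ x₂.count k + 2) :
    (optL a₁ ++ x₁ ++ optL b₁).Perm (optL a₂ ++ x₂ ++ optL b₂) ∧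
    x₁.length = x₂.length ∧ a₂ = some k ∧ b₂ = some k ∧
    10 ≤ p₂.length ∧ 10 ≤ s₂.length := by
  classical
  have e : ∀ c : Fin 8, s₁.count c + (x₁.length + 5 * x₁.count c) + p₁.count c
      = s₂.count c + (x₂.length + 5 * x₂.count c) + p₂.count c := by
    intro c
    have h := hperm.count_eq c
    rw [hX1, hX2] at h
    simp only [List.count_append, count_fW'] at h
    omega
  have elen : s₁.length + 13 * x₁.length + p₁.length
      = s₂.length + 13 * x₂.length + p₂.length := by
    have h := hperm.length_eq
    rw [hX1, hX2] at h
    simp only [List.length_append, length_fW'] at h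
    omega
  have Fp2 : (p₂.count k ≤ 3) ∨ (p₂.count k = 4 ∧ 8 ≤ p₂.length) ∨
      (p₂.count k = 5 ∧ a₂ = some k ∧ 10 ≤ p₂.length) := by
    cases a₂ with
    | none =>
      have hnil : p₂ = [] := List.prefix_nil.mp (by simpa [imgF] using hp2)
      left; simp [hnil]
    | some a =>
      have hp2' : p₂ <+: fL a := by simpa [imgF] using hp2
      obtain ⟨h1, h2, h3, h4, h5, h6⟩ := pref_facts' a k hp2' hp2len
      by_cases hc5 : p₂.count k = 5
      · exact Or.inr (Or.inr ⟨hc5, by rw [(h2 hc5).1], (h2 hc5).2⟩)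
      · by_cases hc4 : 4 ≤ p₂.count k
        · exact Or.inr (Or.inl ⟨by omega, h3 hc4⟩)
        · exact Or.inl (by omega)
  have Fs2 : (s₂.count k ≤ 3) ∨ (s₂.count k = 4 ∧ 8 ≤ s₂.length) ∨
      (s₂.count k = 5 ∧ b₂ = some k ∧ 10 ≤ s₂.length) := by
    cases b₂ with
    | none =>
      have hnil : s₂ = [] := List.suffix_nil.mp (by simpa [imgF] using hs2)
      left; simp [hnil]
    | some b =>
      have hs2' : s₂ <:+ fL b := by simpa [imgF] using hs2
      obtain ⟨h1, h2, h3, h4, h5, h6⟩ := suf_facts' b k hs2' hs2len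
      by_cases hc5 : s₂.count k = 5
      · exact Or.inr (Or.inr ⟨hc5, by rw [(h2 hc5).1], (h2 hc5).2⟩)
      · by_cases hc4 : 4 ≤ s₂.count k
        · exact Or.inr (Or.inl ⟨by omega, h3 hc4⟩)
        · exact Or.inl (by omega)
  have ek := e k
  have core : x₁.length = x₂.length ∧ x₁.count k = x₂.count k + 2 ∧
      p₂.count k = 5 ∧ s₂.count k = 5 ∧ p₁.count k = 0 ∧ s₁.count k = 0 ∧
      10 ≤ p₂.length ∧ 10 ≤ s₂.length ∧ 8 ≤ p₁.length ∧ 8 ≤ s₁.length := by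
    rcases Fp2 with h | ⟨h, hL⟩ | ⟨h, _, hL⟩ <;>
      rcases Fs2 with g | ⟨g, gL⟩ | ⟨g, _, gL⟩ <;> omega
  obtain ⟨hnn, hAB, hp2k5, hs2k5, hp1k0, hs1k0, hp2L, hs2L, hp1L, hs1L⟩ := core
  have ha2 : a₂ = some k := by
    rcases Fp2 with h | ⟨h, _⟩ | ⟨_, ha, _⟩
    · omega
    · omega
    · exact ha
  have hb2 : b₂ = some k := by
    rcases Fs2 with h | ⟨h, _⟩ | ⟨_, hb, _⟩
    · omega
    · omega
    · exact hb
  -- the borders of X₁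
  have hp1ne : p₁ ≠ [] := by
    intro h; rw [h] at hp1L; simp at hp1L
  have hs1ne : s₁ ≠ [] := by
    intro h; rw [h] at hs1L; simp at hs1L
  obtain ⟨a, ha1⟩ : ∃ a, a₁ = some a := by
    cases a₁ with
    | none =>
      exact absurd (List.prefix_nil.mp (by simpa [imgF] using hp1)) hp1ne
    | some a => exact ⟨a, rfl⟩
  obtain ⟨b, hb1⟩ : ∃ b, b₁ = some b := by
    cases b₁ with
    | none =>
      exact absurd (List.suffix_nil.mp (by simpa [imgF] using hs1)) hs1ne
    | some b => exact ⟨b, rfl⟩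
  have hp1' : p₁ <+: fL a := by rw [ha1] at hp1; simpa [imgF] using hp1
  have hs1' : s₁ <:+ fL b := by rw [hb1] at hs1; simpa [imgF] using hs1
  have hp2' : p₂ <+: fL k := by rw [ha2] at hp2; simpa [imgF] using hp2
  have hs2' : s₂ <:+ fL k := by rw [hb2] at hs2; simpa [imgF] using hs2
  have hak : a ≠ k := by
    intro h
    have hc := (pref_facts' a k hp1' hp1len).2.2.2.2.1 h.symm hp1ne
    omega
  have hbk : b ≠ k := by
    intro h
    have hc := (suf_facts' b k hs1' hs1len).2.2.2.2.1 h.symm hs1ne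
    omega
  refine ⟨?_, hnn, ha2, hb2, hp2L, hs2L⟩
  rw [List.perm_iff_count]
  intro c
  rw [ha1, hb1, ha2, hb2, optL_some', optL_some', optL_some']
  simp only [List.count_append, List.count_singleton']
  have ec := e c
  by_cases hck : c = k
  · rw [if_neg (show ¬ (a = c) from fun h => hak (h.trans hck)),
      if_neg (show ¬ (b = c) from fun h => hbk (h.trans hck)),
      if_pos (show k = c from hck.symm)]
    have hAB' : x₁.count c = x₂.count c + 2 := by rw [hck]; exact hAB
    omega
  · have h2p : p₂.count c ≤ 1 :=
      (pref_facts' k c hp2' hp2len).2.2.2.2.2 hck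
    have h2s : s₂.count c ≤ 1 :=
      (suf_facts' k c hs2' hs2len).2.2.2.2.2 hck
    rw [if_neg (show ¬ (k = c) from fun h => hck h.symm)]
    by_cases hca : a = c
    · rw [if_pos (show a = c from hca)]
      have h4 : 4 ≤ p₁.count c :=
        (pref_facts' a c hp1' hp1len).2.2.2.1 hca.symm hp1L
      have h5 : p₁.count c ≤ 5 := (pref_facts' a c hp1' hp1len).1
      by_cases hcb : b = c
      · rw [if_pos (show b = c from hcb)]
        have g4 : 4 ≤ s₁.count c :=
          (suf_facts' b c hs1' hs1len).2.2.2.1 hcb.symm hs1L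
        have g5 : s₁.count c ≤ 5 := (suf_facts' b c hs1' hs1len).1
        omega
      · rw [if_neg (show ¬ (b = c) from hcb)]
        have g1 : s₁.count c ≤ 1 :=
          (suf_facts' b c hs1' hs1len).2.2.2.2.2 (fun h => hcb h.symm)
        omega
    · rw [if_neg (show ¬ (a = c) from hca)]
      have h1 : p₁.count c ≤ 1 :=
        (pref_facts' a c hp1' hp1len).2.2.2.2.2 (fun h => hca h.symm)
      by_cases hcb : b = c
      · rw [if_pos (show b = c from hcb)]
        have g4 : 4 ≤ s₁.count c :=
          (suf_facts' b c hs1' hs1len).2.2.2.1 hcb.symm hs1L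
        have g5 : s₁.count c ≤ 5 := (suf_facts' b c hs1' hs1len).1
        omega
      · rw [if_neg (show ¬ (b = c) from hcb)]
        have g1 : s₁.count c ≤ 1 :=
          (suf_facts' b c hs1' hs1len).2.2.2.2.2 (fun h => hcb h.symm)
        omega
end

section
/- With g(x) = ⌊(x+24)/13⌋, one has g⁵(2403) = 2; consequently, if f^ω(0) contains a factor X₁YX₂ with X₁ ∼ X₂, exponent |X₁YX₂|/|X₁Y| > 1.713, and |X₁| ≤ 1000, then f⁵(0) (up to the cyclic shift σ) contains such a factor. -/
/-- g(x) = ⌊(x+24)/13⌋. -/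
def g (x : ℕ) : ℕ := (x + 24) / 13

/-!
Since f is 13-uniform, a factor u of f(w) is a factor of f(v) for some factor v of w with
13|v| ≤ |u| + 24, i.e. |v| ≤ g(|u|). An exponent above 1.713 with |X₁| ≤ 1000 forces
|X₁YX₂| < 2403. As f^n(0) is a prefix of f⁴(f^n(0)), desubstituting four times shows that X₁YX₂
is a factor of f⁴(v) for a factor v of f^n(0) with |v| ≤ g⁴(2403) = 2. Every such v lies inside a
single block f(c): a pair straddling two blocks f(c)f(d) is cd itself, because f(x) begins and
ends with x. Hence X₁YX₂ is a factor of f⁵(c) = σ^c(f⁵(0)), and σ^(-c) preserves Abelian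
equivalence and all lengths.
-/

namespace List

variable {α β : Type*} {φ : α → List β} {m : ℕ}

theorem length_flatMap_of_length_eq (hφ : ∀ a, (φ a).length = m) (w : List α) :
    (w.flatMap φ).length = m * w.length := by
  simp [length_flatMap, hφ, mul_comm]

theorem flatMap_take_of_length_eq (hφ : ∀ a, (φ a).length = m) (w : List α) (k : ℕ) :
    (w.take k).flatMap φ = (w.flatMap φ).take (m * k) := by
  induction w generalizing k with
  | nil => simp
  | cons a w ih =>
    cases k with
    | zero => simp
    | succ k => rw [take_succ_cons, flatMap_cons, flatMap_cons, ih, mul_add_one, add_comm,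
        ← hφ a, take_length_add_append]

theorem flatMap_drop_of_length_eq (hφ : ∀ a, (φ a).length = m) (w : List α) (k : ℕ) :
    (w.drop k).flatMap φ = (w.flatMap φ).drop (m * k) := by
  induction w generalizing k with
  | nil => simp
  | cons a w ih =>
    cases k with
    | zero => simp
    | succ k => rw [drop_succ_cons, flatMap_cons, ih, mul_add_one, add_comm,
        ← hφ a, drop_length_add_append]

theorem eq_singletons_of_pair_eq_append {a b : α} {l₁ l₂ : List α} (h₁ : l₁ ≠ [])
    (h₂ : l₂ ≠ []) (h : [a, b] = l₁ ++ l₂) : l₁ = [a] ∧ l₂ = [b] := by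
  rcases l₁ with _ | ⟨x, _ | ⟨y, l₁⟩⟩ <;> simp_all

theorem take_drop_infix (l : List α) (i j : ℕ) : (l.drop i).take j <:+: l :=
  (take_prefix _ _).isInfix.trans (drop_suffix _ _).isInfix

theorem exists_infix_of_infix_flatMap (hφ : ∀ a, (φ a).length = m) {u : List β} {w : List α}
    (h : u <:+: w.flatMap φ) :
    ∃ v, v <:+: w ∧ u <:+: v.flatMap φ ∧ m * v.length ≤ u.length + 2 * (m - 1) := by
  rcases eq_or_ne u [] with rfl | hu
  · exact ⟨[], nil_infix, nil_infix, by simp⟩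
  obtain ⟨s, t, hst⟩ := h
  have hlen : s.length + u.length + t.length = m * w.length := by
    rw [← length_flatMap_of_length_eq hφ, ← hst, length_append, length_append]
  have hm : 0 < m := Nat.pos_of_ne_zero fun hm0 => by
    simp [hm0, length_eq_zero_iff, hu] at hlen
  -- `u` starts at offset `r` of block `i` and is covered by the `k` blocks from there on
  set i := s.length / m
  set r := s.length % m
  set k := (r + u.length + m - 1) / m
  have hs : s.length = m * i + r := (Nat.div_add_mod _ _).symm
  have hk : r + u.length ≤ m * k := by
    have h1 : m * k + (r + u.length + m - 1) % m = r + u.length + m - 1 := Nat.div_add_mod _ _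
    have h2 := Nat.mod_lt (r + u.length + m - 1) hm
    omega
  refine ⟨(w.drop i).take k, take_drop_infix _ _ _, ?_, ?_⟩
  · have hu : u = (((w.drop i).flatMap φ).drop r).take u.length := by
      rw [flatMap_drop_of_length_eq hφ, drop_drop, ← hs, ← hst, append_assoc, drop_left,
        take_left]
    rw [flatMap_take_of_length_eq hφ, hu,
      ← min_eq_left (a := u.length) (b := m * k - r) (by omega), ← take_take, ← drop_take]
    exact take_drop_infix _ _ _
  · have hr : r < m := Nat.mod_lt _ hm
    calc m * ((w.drop i).take k).length ≤ m * k := Nat.mul_le_mul_left _ (length_take_le _ _)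
      _ ≤ r + u.length + m - 1 := Nat.mul_div_le _ _
      _ ≤ u.length + 2 * (m - 1) := by omega

end List

theorem length_fL (a : Fin 8) : (fL a).length = 13 := rfl

theorem fW_append (x y : List (Fin 8)) : fW (x ++ y) = fW x ++ fW y := List.flatMap_append

theorem fW_cons (a : Fin 8) (w : List (Fin 8)) : fW (a :: w) = fL a ++ fW w := List.flatMap_cons

theorem fW_singleton (a : Fin 8) : fW [a] = fL a := List.flatMap_singleton _ _

theorem fL_add (a s : Fin 8) : fL (a + s) = (fL a).map (· + s) := by
  simp only [fL, List.map_map, Function.comp_def, add_assoc]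

theorem fW_map_add (w : List (Fin 8)) (s : Fin 8) : fW (w.map (· + s)) = (fW w).map (· + s) := by
  simp only [fW, List.flatMap_map, List.map_flatMap, fL_add]

theorem iterate_fW_singleton (n : ℕ) (a : Fin 8) : fW^[n] [a] = (fIter n).map (· + a) := by
  have hcomm : Function.Commute (List.map (· + a)) fW := fun w => (fW_map_add w a).symm
  simpa [fIter] using (hcomm.iterate_right n [0]).symm

theorem fW_isPrefix_fW {x y : List (Fin 8)} (h : x <+: y) : fW x <+: fW y := by
  obtain ⟨t, rfl⟩ := h
  exact ⟨_, (fW_append x t).symm⟩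

theorem fW_isInfix_fW {x y : List (Fin 8)} (h : x <:+: y) : fW x <:+: fW y := by
  obtain ⟨s, t, rfl⟩ := h
  exact ⟨_, _, by rw [fW_append, fW_append]⟩

theorem iterate_fW_isInfix_iterate_fW {x y : List (Fin 8)} (h : x <:+: y) (k : ℕ) :
    fW^[k] x <:+: fW^[k] y := by
  induction k with
  | zero => exact h
  | succ k ih => simpa only [Function.iterate_succ_apply'] using fW_isInfix_fW ih

theorem fIter_succ (n : ℕ) : fIter (n + 1) = fW (fIter n) :=
  Function.iterate_succ_apply' _ _ _

theorem fIter_add (k n : ℕ) : fIter (k + n) = fW^[k] (fIter n) :=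
  Function.iterate_add_apply _ _ _ _

theorem fIter_prefix_fIter_succ (n : ℕ) : fIter n <+: fIter (n + 1) := by
  induction n with
  | zero => exact ⟨f0.tail, rfl⟩
  | succ n ih => simpa only [fIter_succ] using fW_isPrefix_fW ih

theorem fIter_prefix_fIter_add (n k : ℕ) : fIter n <+: fIter (n + k) := by
  induction k with
  | zero => exact List.prefix_rfl
  | succ k ih => exact ih.trans (fIter_prefix_fIter_succ _)

theorem monotone_g : Monotone g := fun _ _ h => Nat.div_le_div_right (Nat.add_le_add_right h _)

theorem exists_infix_fW_length_le_g {u w : List (Fin 8)} (h : u <:+: fW w) :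
    ∃ v, v <:+: w ∧ u <:+: fW v ∧ v.length ≤ g u.length := by
  obtain ⟨v, hvw, huv, hlen⟩ := List.exists_infix_of_infix_flatMap length_fL h
  exact ⟨v, hvw, huv, (Nat.le_div_iff_mul_le (by norm_num)).2 (by rw [mul_comm]; exact hlen)⟩

theorem exists_infix_iterate_fW_length_le_g {u w : List (Fin 8)} {k : ℕ}
    (h : u <:+: fW^[k] w) : ∃ v, v <:+: w ∧ u <:+: fW^[k] v ∧ v.length ≤ g^[k] u.length := by
  induction k generalizing w with
  | zero => exact ⟨u, h, List.infix_rfl, le_rfl⟩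
  | succ k ih =>
    rw [Function.iterate_succ_apply] at h
    obtain ⟨v', hv'w, huv', hlen'⟩ := ih h
    obtain ⟨v, hvw, hv'v, hlen⟩ := exists_infix_fW_length_le_g hv'w
    refine ⟨v, hvw, ?_, ?_⟩
    · rw [Function.iterate_succ_apply]
      exact huv'.trans (iterate_fW_isInfix_iterate_fW hv'v k)
    · rw [Function.iterate_succ_apply']
      exact hlen.trans (monotone_g hlen')

theorem head?_fL (a : Fin 8) : (fL a).head? = some a := by simp [fL, f0]

theorem getLast?_fL (a : Fin 8) : (fL a).getLast? = some a := by simp [fL, f0]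

theorem pair_infix_fW {a b : Fin 8} {w : List (Fin 8)} (h : [a, b] <:+: fW w) :
    (∃ c, [a, b] <:+: fL c) ∨ [a, b] <:+: w := by
  induction w with
  | nil => simp [fW] at h
  | cons c w ih =>
    rw [fW_cons, List.infix_append_iff_ne_nil] at h
    rcases h with h | h | ⟨l₁, l₂, h₁, h₂, hab, hsuf, hpre⟩
    · exact .inl ⟨c, h⟩
    · exact (ih h).imp_right List.infix_cons
    · obtain ⟨rfl, rfl⟩ := List.eq_singletons_of_pair_eq_append h₁ h₂ hab
      rw [List.singleton_suffix_iff_getLast?_eq_some, getLast?_fL, Option.some_inj] at hsuf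
      cases w with
      | nil => simp [fW] at hpre
      | cons d w =>
        rw [fW_cons, List.singleton_prefix_iff_head?_eq_some, List.head?_append, head?_fL,
          Option.some_or, Option.some_inj] at hpre
        subst hsuf hpre
        exact .inr ⟨[], w, rfl⟩

theorem exists_infix_fL_of_infix_fIter {v : List (Fin 8)} {n : ℕ} (h : v <:+: fIter n)
    (hv : v.length ≤ 2) : ∃ c, v <:+: fL c := by
  match v, hv with
  | [], _ => exact ⟨0, List.nil_infix⟩
  | [a], _ => exact ⟨a, (List.singleton_prefix_iff_head?_eq_some.2 (head?_fL a)).isInfix⟩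
  | [a, b], _ =>
    induction n with
    | zero => exact absurd h.length_le (by simp [fIter])
    | succ n ih =>
      rw [fIter_succ] at h
      exact (pair_infix_fW h).elim id ih

theorem lt_2403_of_div_gt {p q : ℕ} (hpq : (1.713 : ℝ) < q / p) (hq : q ≤ p + 1000) :
    q < 2403 := by
  have hp : (0 : ℝ) < p := by
    rcases p.eq_zero_or_pos with rfl | hp
    · norm_num at hpq
    · exact_mod_cast hp
  rw [lt_div_iff₀ hp] at hpq
  have hq' : (q : ℝ) ≤ p + 1000 := by exact_mod_cast hq
  exact_mod_cast (show (q : ℝ) < 2403 by linarith)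

theorem exists_map_add_infix_fIter_five {u : List (Fin 8)} (hu : FactorFP u)
    (hlen : u.length < 2403) : ∃ c, u.map (· + c) <:+: fIter 5 := by
  obtain ⟨n, hn⟩ := hu
  have h4 : u <:+: fW^[4] (fIter n) := by
    rw [← fIter_add, add_comm]
    exact hn.trans (fIter_prefix_fIter_add n 4).isInfix
  obtain ⟨v, hvn, huv, hv⟩ := exists_infix_iterate_fW_length_le_g h4
  have hv2 : v.length ≤ 2 := hv.trans ((monotone_g.iterate 4) hlen.le)
  obtain ⟨c, hvc⟩ := exists_infix_fL_of_infix_fIter hvn hv2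
  have h5 : u <:+: (fIter 5).map (· + c) := by
    rw [← iterate_fW_singleton, Function.iterate_succ_apply, fW_singleton]
    exact huv.trans (iterate_fW_isInfix_iterate_fW hvc 4)
  refine ⟨-c, ?_⟩
  simpa [List.map_map, Function.comp_def] using h5.map (· + -c)

theorem stmt14 :
    g^[5] 2403 = 2 ∧
    (∀ X₁ Y X₂ : List (Fin 8), FactorFP (X₁ ++ Y ++ X₂) → X₁.Perm X₂ →
      (1.713 : ℝ) < ((X₁ ++ Y ++ X₂).length : ℝ) / ((X₁ ++ Y).length : ℝ) →
      X₁.length ≤ 1000 →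
      ∃ X₁' Y' X₂' : List (Fin 8), X₁' ++ Y' ++ X₂' <:+: fIter 5 ∧
        X₁'.Perm X₂' ∧
        (1.713 : ℝ) < ((X₁' ++ Y' ++ X₂').length : ℝ) / ((X₁' ++ Y').length : ℝ) ∧
        X₁'.length ≤ 1000) := by
  refine ⟨by decide, fun X₁ Y X₂ hfac hperm hexp hX₁ => ?_⟩
  have hlen : (X₁ ++ Y ++ X₂).length < 2403 := by
    refine lt_2403_of_div_gt hexp ?_
    simp only [List.length_append, ← hperm.length_eq]
    omega
  obtain ⟨c, hc⟩ := exists_map_add_infix_fIter_five hfac hlen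
  exact ⟨X₁.map (· + c), Y.map (· + c), X₂.map (· + c), by simpa using hc, hperm.map _,
    by simpa using hexp, by simpa using hX₁⟩
end
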